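/- arXiv:1812.05282 — 3 statements merged into one kernel-verified Lean document; each statement's English description precedes it below -/
import Mathlib

section
/- Let n be a natural number and let a, b : Fin n → ℝ be monotone (non-decreasing) sequences. Then for every permutation σ of Fin n, max over i of |a_i − b_i| ≤ max over i of |a_i − b_{σ(i)}|. In other words, among all bijective matchings between the two sorted sequences, the identity (order-preserving) matching minimizes the maximum absolute difference of matched values. -/
/-!
An injective self-map of a finite linear order cannot send all of `Ici i` into `Ioi i`, which is
one element smaller; so some `j ≥ i` has `σ j ≤ i`, and dually some `j ≤ i` has `i ≤ σ j`.
If `b i ≤ a i`, monotonicity at the first crossing gives `a i - b i ≤ a j - b (σ j)`; if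
`a i ≤ b i`, the second crossing gives `b i - a i ≤ b (σ j) - a j`. Hence every term of the
identity matching is dominated by some term of the matching `σ`.
-/

theorem Function.Injective.exists_le_and_apply_le {α : Type*} [LinearOrder α] [Finite α]
    {f : α → α} (hf : f.Injective) (i : α) : ∃ j, i ≤ j ∧ f j ≤ i := by
  by_contra! h
  have hmaps : Set.MapsTo f (Set.Ici i) (Set.Ioi i) := fun j hj => h j hj
  have hle := Set.ncard_le_ncard_of_injOn f hmaps hf.injOn
  have hlt := Set.ncard_lt_ncard (Set.Ioi_ssubset_Ici_self (a := i))
  omega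

theorem Function.Injective.exists_le_and_le_apply {α : Type*} [LinearOrder α] [Finite α]
    {f : α → α} (hf : f.Injective) (i : α) : ∃ j, j ≤ i ∧ i ≤ f j :=
  hf.exists_le_and_apply_le (α := αᵒᵈ) i

theorem Monotone.exists_abs_sub_le_abs_sub_comp {α β : Type*} [LinearOrder α] [Finite α]
    [AddCommGroup β] [LinearOrder β] [IsOrderedAddMonoid β] {a b : α → β}
    (ha : Monotone a) (hb : Monotone b) {σ : α → α} (hσ : σ.Injective) (i : α) :
    ∃ j, |a i - b i| ≤ |a j - b (σ j)| := by
  rcases le_total (b i) (a i) with hba | hab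
  · obtain ⟨j, hij, hσj⟩ := hσ.exists_le_and_apply_le i
    refine ⟨j, ?_⟩
    calc |a i - b i| = a i - b i := abs_of_nonneg (sub_nonneg.2 hba)
      _ ≤ a j - b (σ j) := sub_le_sub (ha hij) (hb hσj)
      _ ≤ |a j - b (σ j)| := le_abs_self _
  · obtain ⟨j, hji, hiσ⟩ := hσ.exists_le_and_le_apply i
    refine ⟨j, ?_⟩
    calc |a i - b i| = b i - a i := abs_sub_comm (a i) (b i) ▸ abs_of_nonneg (sub_nonneg.2 hab)
      _ ≤ b (σ j) - a j := sub_le_sub (hb hiσ) (ha hji)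
      _ ≤ |a j - b (σ j)| := abs_sub_comm (a j) (b (σ j)) ▸ le_abs_self _

theorem Finset.fold_max_le_fold_max_of_forall_exists_le {ι β : Type*} [LinearOrder β]
    {s : Finset ι} {f g : ι → β} {c : β} (h : ∀ i ∈ s, ∃ j ∈ s, f i ≤ g j) :
    s.fold max c f ≤ s.fold max c g := by
  refine (Finset.fold_max_le _).2 ⟨(Finset.le_fold_max _).2 (Or.inl le_rfl), fun i hi => ?_⟩
  obtain ⟨j, hj, hfg⟩ := h i hi
  exact (Finset.le_fold_max _).2 (Or.inr ⟨j, hj, hfg⟩)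

/-- Among all bijective matchings between two non-decreasing sequences of reals,
the identity (order-preserving) matching minimizes the maximum absolute difference.
The maximum over an empty index set is taken to be 0. -/
theorem sorted_matching_optimal (n : ℕ) (a b : Fin n → ℝ)
    (ha : Monotone a) (hb : Monotone b) (σ : Equiv.Perm (Fin n)) :
    Finset.fold max 0 (fun i => |a i - b i|) Finset.univ ≤
      Finset.fold max 0 (fun i => |a i - b (σ i)|) Finset.univ :=
  Finset.fold_max_le_fold_max_of_forall_exists_le fun i _ =>
    (ha.exists_abs_sub_le_abs_sub_comp hb σ.injective i).imp fun j hj => ⟨Finset.mem_univ j, hj⟩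
end

section
/- Let n be a natural number and let a, b : Fin n → ℝ be monotone (non-decreasing) sequences with 0 ≤ a_i and 0 ≤ b_i for all i. Consider partial matchings μ between the index sets: μ is an injective partial bijection M between subsets of Fin n, where a matched pair (i, j) ∈ M costs |a_i − b_j|, an unmatched index i on the a-side costs a_i, and an unmatched index j on the b-side costs b_j; the cost C_μ of the matching is the maximum of all these costs. Then the minimum of C_μ over all such partial matchings equals max over i of |a_i − b_i|; in particular, it is achieved by the total matching pairing index i with index i. -/
/-- The cost of a partial matching `M` between the diagrams
`D₁ = {(0, a i)}` and `D₂ = {(0, b j)}` (with the ℓ₁ norm on ℝ²):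
a matched pair `(i, j) ∈ M` costs `|a i − b j|`, an unmatched index `i`
on the `a`-side costs `a i` (its ℓ₁ distance to the diagonal), and an
unmatched index `j` on the `b`-side costs `b j`. -/
noncomputable def matchingCost (n : ℕ) (a b : Fin n → ℝ)
    (M : Finset (Fin n × Fin n)) : ℝ :=
  max (Finset.fold max 0 (fun p => |a p.1 - b p.2|) M)
    (max
      (Finset.fold max 0 a (Finset.univ.filter (fun i => ∀ j, (i, j) ∉ M)))
      (Finset.fold max 0 b (Finset.univ.filter (fun j => ∀ i, (i, j) ∉ M))))

/-- One-sided pigeonhole lower bound. -/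
lemma aux_lower {n : ℕ} {a b : Fin n → ℝ} (ha : Monotone a) (hb : Monotone b)
    (hb0 : ∀ i, 0 ≤ b i)
    {M : Finset (Fin n × Fin n)} {c : ℝ}
    (hm : ∀ p ∈ M, |a p.1 - b p.2| ≤ c)
    (hua : ∀ i : Fin n, (∀ j, (i, j) ∉ M) → a i ≤ c)
    (hinj : ∀ p ∈ M, ∀ q ∈ M, p.2 = q.2 → p.1 = q.1)
    (i : Fin n) : a i - b i ≤ c := by
  by_contra h
  push_neg at h
  -- every j ≥ i must be matched
  have hmatch : ∀ j : Fin n, i ≤ j → ∃ k, (j, k) ∈ M := by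
    intro j hj
    by_contra hk
    push_neg at hk
    have h1 : a j ≤ c := hua j hk
    have h2 : a i ≤ a j := ha hj
    have := hb0 i
    linarith
  classical
  set f : Fin n → Fin n := fun j => if hj : ∃ k, (j, k) ∈ M then hj.choose else i with hf
  have hfM : ∀ j : Fin n, i ≤ j → (j, f j) ∈ M := by
    intro j hj
    have hex := hmatch j hj
    simp only [hf, dif_pos hex]
    exact hex.choose_spec
  have hmaps : ∀ j ∈ Finset.Ici i, f j ∈ Finset.Ioi i := by
    intro j hj
    rw [Finset.mem_Ici] at hj
    have hM := hfM j hj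
    have hcost := hm _ hM
    have hab : a j - b (f j) ≤ c := (abs_le.mp hcost).2
    have h2 : a i ≤ a j := ha hj
    have : b i < b (f j) := by linarith
    rw [Finset.mem_Ioi]
    by_contra hle
    push_neg at hle
    exact absurd (hb hle) (not_le.mpr this)
  have hinjOn : Set.InjOn f (Finset.Ici i) := by
    intro x hx y hy hxy
    rw [Finset.coe_Ici, Set.mem_Ici] at hx hy
    exact hinj _ (hfM x hx) _ (hfM y hy) hxy
  have hcard := Finset.card_le_card_of_injOn f hmaps hinjOn
  rw [Fin.card_Ici, Fin.card_Ioi] at hcard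
  have := i.isLt
  omega

/-- The bottleneck distance (w.r.t. the ℓ₁ norm) between the diagrams
`{(0, a₁), …, (0, aₙ)}` and `{(0, b₁), …, (0, bₙ)}`, with `a`, `b`
non-decreasing and nonnegative, equals `max_i |aᵢ − bᵢ|`: this value is a
lower bound for the cost of every injective partial matching, and it is
achieved by the total matching pairing index `i` with index `i`. -/
theorem bottleneck_on_axis (n : ℕ) (a b : Fin n → ℝ)
    (ha : Monotone a) (hb : Monotone b)
    (ha0 : ∀ i, 0 ≤ a i) (hb0 : ∀ i, 0 ≤ b i) :
    IsLeast
      {c : ℝ | ∃ M : Finset (Fin n × Fin n),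
        (∀ p ∈ M, ∀ q ∈ M, p.1 = q.1 → p.2 = q.2) ∧
        (∀ p ∈ M, ∀ q ∈ M, p.2 = q.2 → p.1 = q.1) ∧
        c = matchingCost n a b M}
      (Finset.fold max 0 (fun i => |a i - b i|) Finset.univ) ∧
    matchingCost n a b (Finset.univ.image (fun i => (i, i))) =
      Finset.fold max 0 (fun i => |a i - b i|) Finset.univ := by
  classical
  -- compute the cost of the identity matching
  have hid : matchingCost n a b (Finset.univ.image (fun i => (i, i))) =
      Finset.fold max 0 (fun i => |a i - b i|) Finset.univ := by
    unfold matchingCost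
    have h1 : Finset.fold max 0 (fun p => |a p.1 - b p.2|)
        (Finset.univ.image (fun i : Fin n => (i, i))) =
        Finset.fold max 0 (fun i => |a i - b i|) Finset.univ := by
      rw [Finset.fold_image (fun x _ y _ hxy => ((Prod.mk.injEq _ _ _ _).mp hxy).1)]
      rfl
    have h2 : (Finset.univ.filter
        (fun i : Fin n => ∀ j, (i, j) ∉ Finset.univ.image (fun i : Fin n => (i, i)))) = ∅ := by
      apply Finset.filter_false_of_mem
      intro x _ hx
      exact hx x (Finset.mem_image.mpr ⟨x, Finset.mem_univ x, rfl⟩)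
    have h3 : (Finset.univ.filter
        (fun j : Fin n => ∀ i, (i, j) ∉ Finset.univ.image (fun i : Fin n => (i, i)))) = ∅ := by
      apply Finset.filter_false_of_mem
      intro x _ hx
      exact hx x (Finset.mem_image.mpr ⟨x, Finset.mem_univ x, rfl⟩)
    rw [h1, h2, h3]
    simp only [Finset.fold_empty, max_self]
    have : (0 : ℝ) ≤ Finset.fold max 0 (fun i => |a i - b i|) Finset.univ :=
      (Finset.le_fold_max _).mpr (Or.inl le_rfl)
    exact max_eq_left this
  refine ⟨⟨⟨Finset.univ.image (fun i => (i, i)), ?_, ?_, hid.symm⟩, ?_⟩, hid⟩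
  · intro p hp q hq hpq
    rw [Finset.mem_image] at hp hq
    obtain ⟨x, _, rfl⟩ := hp
    obtain ⟨y, _, rfl⟩ := hq
    exact hpq
  · intro p hp q hq hpq
    rw [Finset.mem_image] at hp hq
    obtain ⟨x, _, rfl⟩ := hp
    obtain ⟨y, _, rfl⟩ := hq
    exact hpq
  · rintro c ⟨M, hM1, hM2, rfl⟩
    rw [Finset.fold_max_le]
    set c := matchingCost n a b M with hc
    have hc0 : 0 ≤ c := le_trans ((Finset.le_fold_max _).mpr (Or.inl le_rfl)) (le_max_left _ _)
    refine ⟨hc0, fun i _ => ?_⟩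
    have hm : ∀ p ∈ M, |a p.1 - b p.2| ≤ c := fun p hp =>
      le_trans ((Finset.le_fold_max _).mpr (Or.inr ⟨p, hp, le_rfl⟩)) (le_max_left _ _)
    have hua : ∀ i : Fin n, (∀ j, (i, j) ∉ M) → a i ≤ c := by
      intro i hi
      refine le_trans ((Finset.le_fold_max _).mpr (Or.inr ⟨i, ?_, le_rfl⟩))
        (le_trans (le_max_left _ _) (le_max_right _ _))
      simp [hi]
    have hub : ∀ j : Fin n, (∀ i, (i, j) ∉ M) → b j ≤ c := by
      intro j hj
      refine le_trans ((Finset.le_fold_max _).mpr (Or.inr ⟨j, ?_, le_rfl⟩))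
        (le_trans (le_max_right _ _) (le_max_right _ _))
      simp [hj]
    have hL : a i - b i ≤ c := aux_lower ha hb hb0 hm hua hM2 i
    -- symmetric side with swapped matching
    have hR : b i - a i ≤ c := by
      refine aux_lower hb ha ha0 (M := M.image Prod.swap) ?_ ?_ ?_ i
      · intro p hp
        rw [Finset.mem_image] at hp
        obtain ⟨q, hq, rfl⟩ := hp
        rw [abs_sub_comm]
        exact hm q hq
      · intro j hj
        refine hub j (fun i hi => hj i ?_)
        exact Finset.mem_image.mpr ⟨(i, j), hi, rfl⟩
      · intro p hp q hq hpq
        rw [Finset.mem_image] at hp hq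
        obtain ⟨p', hp', rfl⟩ := hp
        obtain ⟨q', hq', rfl⟩ := hq
        exact hM1 p' hp' q' hq' hpq
    rw [abs_sub_le_iff]
    exact ⟨hL, hR⟩
end

section
/- Let n be a natural number, let t, s : Fin n → ℝ be monotone (non-decreasing) sequences with 0 ≤ t_i and 0 ≤ s_i for all i, and let p, q : Fin n → ℝ be arbitrary sequences with 0 ≤ p_i and 0 ≤ q_i for all i. Then for every permutation σ of Fin n, max over i of |t_i − s_i| ≤ max over i of ‖(p_i, p_i + t_i) − (q_{σ(i)}, q_{σ(i)} + s_{σ(i)})‖₁. Consequently, the minimum over all bijections σ of the maximum ℓ₁ matching cost between the diagrams {(p_i, p_i + t_i)} and {(q_j, q_j + s_j)} is at least max_i |t_i − s_i|. -/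
/-- Pigeonhole: any permutation of `Fin n` has some `i ≥ k` with `σ i ≤ k`. -/
lemma perm_exists_ge_le {n : ℕ} (σ : Equiv.Perm (Fin n)) (k : Fin n) :
    ∃ i : Fin n, k ≤ i ∧ σ i ≤ k := by
  by_contra h
  push_neg at h
  -- then σ⁻¹ maps Iic k into Iio k
  have hmap : ∀ j ∈ Finset.Iic k, σ⁻¹ j ∈ Finset.Iio k := by
    intro j hj
    simp only [Finset.mem_Iic] at hj
    simp only [Finset.mem_Iio]
    by_contra hlt
    push_neg at hlt
    have := h (σ⁻¹ j) hlt
    simp at this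
    exact absurd hj (not_le.mpr this)
  have hcard := Finset.card_le_card_of_injOn (fun j => σ⁻¹ j) hmap
    (fun a _ b _ hab => σ⁻¹.injective hab)
  simp [Fin.card_Iic, Fin.card_Iio] at hcard

lemma perm_exists_le_ge {n : ℕ} (σ : Equiv.Perm (Fin n)) (k : Fin n) :
    ∃ i : Fin n, i ≤ k ∧ k ≤ σ i := by
  obtain ⟨i, h1, h2⟩ := perm_exists_ge_le σ⁻¹ k
  exact ⟨σ⁻¹ i, by simpa using h2, by simpa using h1⟩

/-- For trees of loops: for non-decreasing nonnegative persistence values `t`, `s`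
and arbitrary nonnegative birth values `p`, `q`, every bijective matching between
the diagrams `{(pᵢ, pᵢ + tᵢ)}` and `{(qⱼ, qⱼ + sⱼ)}` has maximum ℓ₁ cost at least
`max_i |tᵢ − sᵢ|`. -/
theorem tree_of_loops_bottleneck_lower_bound (n : ℕ) (t s p q : Fin n → ℝ)
    (ht : Monotone t) (hs : Monotone s)
    (ht0 : ∀ i, 0 ≤ t i) (hs0 : ∀ i, 0 ≤ s i)
    (hp0 : ∀ i, 0 ≤ p i) (hq0 : ∀ i, 0 ≤ q i)
    (σ : Equiv.Perm (Fin n)) :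
    Finset.fold max 0 (fun i => |t i - s i|) Finset.univ ≤
      Finset.fold max 0
        (fun i => |p i - q (σ i)| + |(p i + t i) - (q (σ i) + s (σ i))|)
        Finset.univ := by
  rw [Finset.fold_max_le]
  constructor
  · rw [Finset.le_fold_max]; left; rfl
  · intro k _
    -- cost at index i dominates |t i - s (σ i)|
    have key : ∀ i : Fin n, |t i - s (σ i)| ≤
        |p i - q (σ i)| + |(p i + t i) - (q (σ i) + s (σ i))| := by
      intro i
      have h1 : |t i - s (σ i)| =
          |((p i + t i) - (q (σ i) + s (σ i))) - (p i - q (σ i))| := by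
        ring_nf
      rw [h1]
      calc |((p i + t i) - (q (σ i) + s (σ i))) - (p i - q (σ i))|
          ≤ |(p i + t i) - (q (σ i) + s (σ i))| + |p i - q (σ i)| := abs_sub _ _
        _ = |p i - q (σ i)| + |(p i + t i) - (q (σ i) + s (σ i))| := by ring
    rcases le_total (s k) (t k) with hc | hc
    · obtain ⟨i, hki, hik⟩ := perm_exists_ge_le σ k
      rw [Finset.le_fold_max]
      right
      refine ⟨i, Finset.mem_univ i, ?_⟩
      have h2 : |t k - s k| ≤ |t i - s (σ i)| := by
        have := ht hki
        have := hs hik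
        rw [abs_of_nonneg (by linarith)]
        have : t k - s k ≤ t i - s (σ i) := by linarith
        exact this.trans (le_abs_self _)
      exact h2.trans (key i)
    · obtain ⟨i, hik, hki⟩ := perm_exists_le_ge σ k
      rw [Finset.le_fold_max]
      right
      refine ⟨i, Finset.mem_univ i, ?_⟩
      have h2 : |t k - s k| ≤ |t i - s (σ i)| := by
        have := ht hik
        have := hs hki
        rw [abs_of_nonpos (by linarith)]
        have : -(t k - s k) ≤ -(t i - s (σ i)) := by linarith
        exact this.trans (neg_le_abs _)
      exact h2.trans (key i)
end
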